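/- arXiv:math/0609715 — 2 statements merged into one kernel-verified Lean document; each statement's English description precedes it below -/
import Mathlib

section
/- Let V = {V_α} be a right π-comodule over the left π-coisotropic quantum subgroup (C, σ) of a Hopf π-coalgebra H, with coactions ρ_{α,β} : V_{αβ} → V_α ⊗ C_β. Define Ind(ρ)_α = { x ∈ V_1 ⊗ H_α : (I_1 ⊗ L_{1,α})(x) = (ρ_{1,1} ⊗ I_α)(x) }. Then the family Ind(ρ) = {Ind(ρ)_α} is a right π-comodule over H under the maps I_1 ⊗ Δ^H_{α,β}; in particular (I_1 ⊗ Δ^H_{α,β})(Ind(ρ)_{αβ}) ⊆ Ind(ρ)_α ⊗ H_β. -/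
open TensorProduct LinearMap

/-- The data and axioms of a `π`-coalgebra over `K`: a family of `K`-vector spaces
`C α` indexed by a group `π`, with comultiplications
`Δ_{α,β} : C_{αβ} → C α ⊗ C β` and a counit `ε : C 1 → K`, satisfying
coassociativity and counitality.  (To avoid dependent-type issues, the
comultiplication takes an index `γ` together with a proof `α * β = γ`.) -/
structure PiCoalg (K : Type*) [Field K] (π : Type*) [Group π]
    (C : π → Type*) [∀ α, AddCommGroup (C α)] [∀ α, Module K (C α)] where
  comul : ∀ (α β : π) {γ : π}, α * β = γ → (C γ →ₗ[K] C α ⊗[K] C β)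
  counit : C 1 →ₗ[K] K
  coassoc : ∀ (α β γ δ : π) (h : α * β * γ = δ) (h' : α * (β * γ) = δ),
    (TensorProduct.assoc K (C α) (C β) (C γ)).toLinearMap ∘ₗ
        (TensorProduct.map (comul α β rfl) LinearMap.id) ∘ₗ comul (α * β) γ h
      = (TensorProduct.map LinearMap.id (comul β γ rfl)) ∘ₗ comul α (β * γ) h'
  counit_comul : ∀ (α : π),
    (TensorProduct.lid K (C α)).toLinearMap ∘ₗ
        (TensorProduct.map counit LinearMap.id) ∘ₗ comul 1 α (one_mul α)
      = LinearMap.id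
  comul_counit : ∀ (α : π),
    (TensorProduct.rid K (C α)).toLinearMap ∘ₗ
        (TensorProduct.map LinearMap.id counit) ∘ₗ comul α 1 (mul_one α)
      = LinearMap.id

/-- A Hopf `π`-coalgebra: a `π`-coalgebra whose components are `K`-algebras,
whose comultiplications and counit are algebra maps, together with an antipode
family `S_α : H α → H α⁻¹` satisfying the antipode axioms. -/
structure HopfPiCoalg (K : Type*) [Field K] (π : Type*) [Group π]
    (H : π → Type*) [∀ α, Ring (H α)] [∀ α, Algebra K (H α)]
    extends PiCoalg K π H where
  comul_mul : ∀ (α β γ : π) (h : α * β = γ) (x y : H γ),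
    comul α β h (x * y) = comul α β h x * comul α β h y
  comul_one : ∀ (α β γ : π) (h : α * β = γ), comul α β h (1 : H γ) = 1
  counit_mul : ∀ (x y : H 1), counit (x * y) = counit x * counit y
  counit_one : counit (1 : H 1) = 1
  antipode : ∀ (α β : π), α⁻¹ = β → (H α →ₗ[K] H β)
  antipode_left : ∀ (α : π),
    (LinearMap.mul' K (H α)) ∘ₗ
        (TensorProduct.map (antipode α⁻¹ α (inv_inv α)) LinearMap.id) ∘ₗ
          comul α⁻¹ α (inv_mul_cancel α)
      = (Algebra.linearMap K (H α)) ∘ₗ counit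
  antipode_right : ∀ (α : π),
    (LinearMap.mul' K (H α)) ∘ₗ
        (TensorProduct.map LinearMap.id (antipode α⁻¹ α (inv_inv α))) ∘ₗ
          comul α α⁻¹ (mul_inv_cancel α)
      = (Algebra.linearMap K (H α)) ∘ₗ counit

/-- A Hopf `π`-subcoalgebra `(C, σ)` of a Hopf `π`-coalgebra `H`: a Hopf
`π`-coalgebra `C` together with a family of surjective algebra epimorphisms
`σ_α : H α → C α` commuting with comultiplication, counit and antipode. -/
structure HopfPiSub (K : Type*) [Field K] (π : Type*) [Group π]
    (H : π → Type*) [∀ α, Ring (H α)] [∀ α, Algebra K (H α)]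
    (C : π → Type*) [∀ α, Ring (C α)] [∀ α, Algebra K (C α)]
    (hH : HopfPiCoalg K π H) (hC : HopfPiCoalg K π C) where
  σ : ∀ α, H α →ₗ[K] C α
  σ_surj : ∀ α, Function.Surjective (σ α)
  σ_mul : ∀ (α : π) (x y : H α), σ α (x * y) = σ α x * σ α y
  σ_one : ∀ (α : π), σ α (1 : H α) = 1
  σ_comul : ∀ (α β γ : π) (h : α * β = γ),
    (hC.comul α β h) ∘ₗ σ γ = (TensorProduct.map (σ α) (σ β)) ∘ₗ hH.comul α β h
  σ_counit : hC.counit ∘ₗ σ 1 = hH.counit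
  σ_antipode : ∀ (α β : π) (h : α⁻¹ = β),
    (hC.antipode α β h) ∘ₗ σ α = (σ β) ∘ₗ hH.antipode α β h

/-- A left `π`-coisotropic quantum subgroup `(C, σ)` of a Hopf `π`-coalgebra `H`:
a `π`-coalgebra `C` whose components are left `H α`-modules (the action being
recorded as a linear map `ω_α : H α ⊗ C α → C α`), together with surjective
left-module maps `σ_α : H α → C α` intertwining comultiplication and counit. -/
structure Coisotropic (K : Type*) [Field K] (π : Type*) [Group π]
    (H : π → Type*) [∀ α, Ring (H α)] [∀ α, Algebra K (H α)]
    (C : π → Type*) [∀ α, AddCommGroup (C α)] [∀ α, Module K (C α)]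
    (hH : HopfPiCoalg K π H) (hC : PiCoalg K π C) where
  ω : ∀ α, H α ⊗[K] C α →ₗ[K] C α
  ω_assoc : ∀ (α : π) (h k : H α) (c : C α),
    ω α ((h * k) ⊗ₜ[K] c) = ω α (h ⊗ₜ[K] ω α (k ⊗ₜ[K] c))
  ω_one : ∀ (α : π) (c : C α), ω α ((1 : H α) ⊗ₜ[K] c) = c
  σ : ∀ α, H α →ₗ[K] C α
  σ_surj : ∀ α, Function.Surjective (σ α)
  σ_mod : ∀ (α : π) (h k : H α), σ α (h * k) = ω α (h ⊗ₜ[K] σ α k)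
  σ_comul : ∀ (α β γ : π) (h : α * β = γ),
    (hC.comul α β h) ∘ₗ σ γ = (TensorProduct.map (σ α) (σ β)) ∘ₗ hH.comul α β h
  σ_counit : hC.counit ∘ₗ σ 1 = hH.counit

/-- A right `π`-comodule `M` over a `π`-coalgebra `C`, with coactions
`θ_{α,β} : M_{αβ} → M α ⊗ C β` satisfying coassociativity and counitality. -/
structure PiComodule (K : Type*) [Field K] (π : Type*) [Group π]
    (C : π → Type*) [∀ α, AddCommGroup (C α)] [∀ α, Module K (C α)]
    (M : π → Type*) [∀ α, AddCommGroup (M α)] [∀ α, Module K (M α)]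
    (hC : PiCoalg K π C) where
  coact : ∀ (α β : π) {γ : π}, α * β = γ → (M γ →ₗ[K] M α ⊗[K] C β)
  coassoc : ∀ (α β γ δ : π) (h : α * β * γ = δ) (h' : α * (β * γ) = δ),
    (TensorProduct.assoc K (M α) (C β) (C γ)).toLinearMap ∘ₗ
        (TensorProduct.map (coact α β rfl) LinearMap.id) ∘ₗ coact (α * β) γ h
      = (TensorProduct.map LinearMap.id (hC.comul β γ rfl)) ∘ₗ coact α (β * γ) h'
  coact_counit : ∀ (α : π),
    (TensorProduct.rid K (M α)).toLinearMap ∘ₗ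
        (TensorProduct.map LinearMap.id hC.counit) ∘ₗ coact α 1 (mul_one α)
      = LinearMap.id

/-- A left section `g` of a Hopf `π`-subcoalgebra `(C, σ)`: a family of linear
maps `g_α : C α → H α` with convolution inverse `g⁻¹ = {g_α⁻¹ : C_{α⁻¹} → H α}`,
such that `g_α(1) = 1` and `L_{1,α} ∘ g_α = (I ⊗ g_α) ∘ Δ^C_{1,α}`. -/
structure PiSection (K : Type*) [Field K] (π : Type*) [Group π]
    (H : π → Type*) [∀ α, Ring (H α)] [∀ α, Algebra K (H α)]
    (C : π → Type*) [∀ α, Ring (C α)] [∀ α, Algebra K (C α)]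
    (hH : HopfPiCoalg K π H) (hC : HopfPiCoalg K π C)
    (S : HopfPiSub K π H C hH hC) where
  g : ∀ α, C α →ₗ[K] H α
  ginv : ∀ (α β : π), β = α⁻¹ → (C β →ₗ[K] H α)
  g_one : ∀ α, g α (1 : C α) = 1
  g_sec : ∀ α,
    ((TensorProduct.map (S.σ 1) LinearMap.id) ∘ₗ hH.comul 1 α (one_mul α)) ∘ₗ g α
      = (TensorProduct.map LinearMap.id (g α)) ∘ₗ hC.comul 1 α (one_mul α)
  conv_right : ∀ α,
    (LinearMap.mul' K (H α)) ∘ₗ (TensorProduct.map (g α) (ginv α α⁻¹ rfl)) ∘ₗ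
        hC.comul α α⁻¹ (mul_inv_cancel α)
      = (Algebra.linearMap K (H α)) ∘ₗ hC.counit
  conv_left : ∀ α,
    (LinearMap.mul' K (H α)) ∘ₗ (TensorProduct.map (ginv α α⁻¹ rfl) (g α)) ∘ₗ
        hC.comul α⁻¹ α (inv_mul_cancel α)
      = (Algebra.linearMap K (H α)) ∘ₗ hC.counit

/-- The subspace `B = {h : L(h) = u ⊗ h}` (for `u = 1` this is the `π`-quantum
right embeddable homogeneous space). -/
noncomputable def Bsub (K : Type*) [Field K] {C1 Hα : Type*}
    [AddCommGroup C1] [Module K C1] [AddCommGroup Hα] [Module K Hα]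
    (L1 : Hα →ₗ[K] C1 ⊗[K] Hα) (u : C1) : Submodule K Hα :=
  LinearMap.ker (L1 - (TensorProduct.mk K C1 Hα) u)

/-- The induced representation space
`Ind(ρ)_α = { x ∈ V₁ ⊗ H_α : (I ⊗ L_{1,α}) x = (ρ_{1,1} ⊗ I) x }`
(the right-hand side being reassociated canonically). -/
noncomputable def IndSub (K : Type*) [Field K] {V1 C1 Hα : Type*}
    [AddCommGroup V1] [Module K V1] [AddCommGroup C1] [Module K C1]
    [AddCommGroup Hα] [Module K Hα]
    (L1 : Hα →ₗ[K] C1 ⊗[K] Hα) (ρ11 : V1 →ₗ[K] V1 ⊗[K] C1) :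
    Submodule K (V1 ⊗[K] Hα) :=
  LinearMap.ker ((TensorProduct.map LinearMap.id L1) -
    (TensorProduct.assoc K V1 C1 Hα).toLinearMap ∘ₗ
      (TensorProduct.map ρ11 LinearMap.id))

/-! ### Auxiliary lemmas for the proof -/

section IndAux

variable {K : Type*} [Field K]

/-- The canonical linear map `H α → H α'` induced by an equality of indices. -/
def castL {π : Type*} {H : π → Type*}
    [∀ α, AddCommGroup (H α)] [∀ α, Module K (H α)]
    {α α' : π} (e : α = α') : H α →ₗ[K] H α' := by subst e; exact LinearMap.id

@[simp] lemma castL_rfl {π : Type*} {H : π → Type*}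
    [∀ α, AddCommGroup (H α)] [∀ α, Module K (H α)] {α : π} :
    castL (K := K) (H := H) (rfl : α = α) = LinearMap.id := rfl

/-- Changing the indices of the comultiplication of a `π`-coalgebra. -/
lemma comul_cast {π : Type*} [Group π]
    {C : π → Type*} [∀ α, AddCommGroup (C α)] [∀ α, Module K (C α)]
    (hC : PiCoalg K π C) {α α' β β' γ γ' : π}
    (eα : α = α') (eβ : β = β') (eγ : γ = γ') (h : α * β = γ) (h' : α' * β' = γ') :
    hC.comul α' β' h' =
      (TensorProduct.map (castL (K := K) (H := C) eα) (castL (K := K) (H := C) eβ)) ∘ₗ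
        hC.comul α β h ∘ₗ castL (K := K) (H := C) eγ.symm := by
  subst eα; subst eβ; subst eγ; subst h
  simp [TensorProduct.map_id]

lemma eq_symm_comp {M N P : Type*}
    [AddCommGroup M] [Module K M] [AddCommGroup N] [Module K N]
    [AddCommGroup P] [Module K P]
    (e : M ≃ₗ[K] N) (f : P →ₗ[K] M) (g : P →ₗ[K] N)
    (h : e.toLinearMap ∘ₗ f = g) : f = e.symm.toLinearMap ∘ₗ g := by
  rw [← h]; ext x; simp

/-- Key identity: `(L_{1,α} ⊗ I_β) ∘ Δ_{α,β} = assoc⁻¹ ∘ (I ⊗ Δ_{α,β}) ∘ L_{1,αβ}`. -/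
lemma L_comul {π : Type*} [Group π]
    {H : π → Type*} [∀ α, AddCommGroup (H α)] [∀ α, Module K (H α)]
    (hH : PiCoalg K π H)
    {C1 : Type*} [AddCommGroup C1] [Module K C1] (s : H 1 →ₗ[K] C1) (α β : π) :
    TensorProduct.map
        ((TensorProduct.map s LinearMap.id) ∘ₗ hH.comul 1 α (one_mul α))
        (LinearMap.id : H β →ₗ[K] H β) ∘ₗ hH.comul α β rfl
      = (TensorProduct.assoc K C1 (H α) (H β)).symm.toLinearMap ∘ₗ
          TensorProduct.map LinearMap.id (hH.comul α β rfl) ∘ₗ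
            (TensorProduct.map s LinearMap.id) ∘ₗ hH.comul 1 (α * β) (one_mul (α * β)) := by
  have h1 : ((1 : π) * α) * β = α * β := by rw [one_mul]
  have co1 := hH.coassoc 1 α β (α * β) h1 (one_mul (α * β))
  have co2 : TensorProduct.map (hH.comul 1 α rfl) LinearMap.id ∘ₗ hH.comul (1 * α) β h1
      = (TensorProduct.assoc K (H 1) (H α) (H β)).symm.toLinearMap ∘ₗ
          TensorProduct.map LinearMap.id (hH.comul α β rfl) ∘ₗ
            hH.comul 1 (α * β) (one_mul (α * β)) :=
    eq_symm_comp _ _ _ (by rw [← LinearMap.comp_assoc]; exact co1)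
  have step0 : hH.comul α β rfl =
      TensorProduct.map (castL (K := K) (H := H) (one_mul α)) LinearMap.id ∘ₗ
        hH.comul (1 * α) β h1 := by
    have := comul_cast hH (one_mul α) (rfl : β = β) (rfl : α * β = α * β) h1 rfl
    simpa using this
  have step1 : hH.comul 1 α rfl =
      hH.comul 1 α (one_mul α) ∘ₗ castL (K := K) (H := H) (one_mul α) := by
    have := comul_cast hH (rfl : (1:π) = 1) (rfl : α = α) ((one_mul α).symm) (one_mul α) rfl
    simpa using this
  calc
    TensorProduct.map ((TensorProduct.map s LinearMap.id) ∘ₗ hH.comul 1 α (one_mul α))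
        (LinearMap.id : H β →ₗ[K] H β) ∘ₗ hH.comul α β rfl
      = TensorProduct.map ((TensorProduct.map s LinearMap.id) ∘ₗ hH.comul 1 α rfl)
          LinearMap.id ∘ₗ hH.comul (1 * α) β h1 := by
        rw [step0, step1, ← LinearMap.comp_assoc]
        congr 1
        rw [← TensorProduct.map_comp]
        simp [LinearMap.comp_assoc]
    _ = TensorProduct.map (TensorProduct.map s LinearMap.id) LinearMap.id ∘ₗ
          (TensorProduct.map (hH.comul 1 α rfl) LinearMap.id ∘ₗ hH.comul (1 * α) β h1) := by
        rw [← LinearMap.comp_assoc, ← TensorProduct.map_comp, LinearMap.comp_id]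
    _ = TensorProduct.map (TensorProduct.map s LinearMap.id) LinearMap.id ∘ₗ
          (TensorProduct.assoc K (H 1) (H α) (H β)).symm.toLinearMap ∘ₗ
            TensorProduct.map LinearMap.id (hH.comul α β rfl) ∘ₗ
              hH.comul 1 (α * β) (one_mul (α * β)) := by rw [co2]
    _ = ((TensorProduct.assoc K C1 (H α) (H β)).symm.toLinearMap ∘ₗ
          TensorProduct.map s (TensorProduct.map LinearMap.id LinearMap.id)) ∘ₗ
            TensorProduct.map LinearMap.id (hH.comul α β rfl) ∘ₗ
              hH.comul 1 (α * β) (one_mul (α * β)) := by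
        rw [← LinearMap.comp_assoc, TensorProduct.map_map_comp_assoc_symm_eq]
    _ = (TensorProduct.assoc K C1 (H α) (H β)).symm.toLinearMap ∘ₗ
          TensorProduct.map LinearMap.id (hH.comul α β rfl) ∘ₗ
            (TensorProduct.map s LinearMap.id) ∘ₗ hH.comul 1 (α * β) (one_mul (α * β)) := by
        rw [LinearMap.comp_assoc]
        congr 1
        rw [← LinearMap.comp_assoc, ← LinearMap.comp_assoc, ← TensorProduct.map_comp,
          ← TensorProduct.map_comp]
        simp [TensorProduct.map_id]

lemma map_id_comp {M A B D : Type*}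
    [AddCommGroup M] [Module K M] [AddCommGroup A] [Module K A]
    [AddCommGroup B] [Module K B] [AddCommGroup D] [Module K D]
    (f : B →ₗ[K] D) (g : A →ₗ[K] B) :
    TensorProduct.map (LinearMap.id : M →ₗ[K] M) (f ∘ₗ g)
      = TensorProduct.map LinearMap.id f ∘ₗ TensorProduct.map LinearMap.id g :=
  TensorProduct.ext' fun a b => by simp

lemma map_sub_id {M N D : Type*}
    [AddCommGroup M] [Module K M] [AddCommGroup N] [Module K N]
    [AddCommGroup D] [Module K D] (f g : M →ₗ[K] N) :
    TensorProduct.map (f - g) (LinearMap.id : D →ₗ[K] D)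
      = TensorProduct.map f LinearMap.id - TensorProduct.map g LinearMap.id :=
  TensorProduct.ext' fun a b => by simp [TensorProduct.sub_tmul]

lemma natA {V0 A B D2 G : Type*}
    [AddCommGroup V0] [Module K V0] [AddCommGroup A] [Module K A]
    [AddCommGroup B] [Module K B] [AddCommGroup D2] [Module K D2]
    [AddCommGroup G] [Module K G]
    (F : A →ₗ[K] D2) (Δ : G →ₗ[K] A ⊗[K] B) :
    TensorProduct.map (TensorProduct.map (LinearMap.id : V0 →ₗ[K] V0) F)
        (LinearMap.id : B →ₗ[K] B) ∘ₗ
      (TensorProduct.assoc K V0 A B).symm.toLinearMap ∘ₗ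
        TensorProduct.map LinearMap.id Δ
    = (TensorProduct.assoc K V0 D2 B).symm.toLinearMap ∘ₗ
        TensorProduct.map LinearMap.id (TensorProduct.map F LinearMap.id ∘ₗ Δ) := by
  apply TensorProduct.ext'
  intro v g
  simp only [LinearMap.comp_apply, TensorProduct.map_tmul, LinearMap.id_apply]
  generalize Δ g = t
  induction t using TensorProduct.induction_on with
  | zero => simp only [tmul_zero, map_zero]
  | tmul a b => simp
  | add s t hs ht =>
    simp only [tmul_add, map_add]
    rw [hs, ht]

lemma natB_left {V0 C1 A B G : Type*}
    [AddCommGroup V0] [Module K V0] [AddCommGroup C1] [Module K C1]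
    [AddCommGroup A] [Module K A] [AddCommGroup B] [Module K B]
    [AddCommGroup G] [Module K G]
    (ρ0 : V0 →ₗ[K] V0 ⊗[K] C1) (Δ : G →ₗ[K] A ⊗[K] B) :
    TensorProduct.map ((TensorProduct.assoc K V0 C1 A).toLinearMap ∘ₗ
        TensorProduct.map ρ0 LinearMap.id) (LinearMap.id : B →ₗ[K] B) ∘ₗ
      (TensorProduct.assoc K V0 A B).symm.toLinearMap ∘ₗ
        TensorProduct.map LinearMap.id Δ
    = (TensorProduct.assoc K V0 (C1 ⊗[K] A) B).symm.toLinearMap ∘ₗ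
        TensorProduct.map LinearMap.id (TensorProduct.assoc K C1 A B).symm.toLinearMap ∘ₗ
          (TensorProduct.assoc K V0 C1 (A ⊗[K] B)).toLinearMap ∘ₗ
            TensorProduct.map ρ0 Δ := by
  apply TensorProduct.ext'
  intro v g
  simp only [LinearMap.comp_apply, TensorProduct.map_tmul, LinearMap.id_apply]
  generalize Δ g = t
  induction t using TensorProduct.induction_on with
  | zero => simp only [tmul_zero, map_zero]
  | tmul a b =>
    simp only [LinearEquiv.coe_coe, TensorProduct.assoc_symm_tmul, TensorProduct.map_tmul,
      LinearMap.comp_apply, LinearMap.id_apply]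
    generalize ρ0 v = u
    induction u using TensorProduct.induction_on with
    | zero => simp only [zero_tmul, map_zero]
    | tmul v0 c => simp
    | add s t hs ht =>
      simp only [add_tmul, map_add]
      rw [hs, ht]
  | add s t hs ht =>
    simp only [tmul_add, map_add]
    rw [hs, ht]

lemma natB_right {V0 C1 A B G : Type*}
    [AddCommGroup V0] [Module K V0] [AddCommGroup C1] [Module K C1]
    [AddCommGroup A] [Module K A] [AddCommGroup B] [Module K B]
    [AddCommGroup G] [Module K G]
    (ρ0 : V0 →ₗ[K] V0 ⊗[K] C1) (Δ : G →ₗ[K] A ⊗[K] B) :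
    ((TensorProduct.assoc K V0 (C1 ⊗[K] A) B).symm.toLinearMap ∘ₗ
        TensorProduct.map LinearMap.id
          ((TensorProduct.assoc K C1 A B).symm.toLinearMap ∘ₗ
            TensorProduct.map LinearMap.id Δ)) ∘ₗ
      (TensorProduct.assoc K V0 C1 G).toLinearMap ∘ₗ
        TensorProduct.map ρ0 LinearMap.id
    = (TensorProduct.assoc K V0 (C1 ⊗[K] A) B).symm.toLinearMap ∘ₗ
        TensorProduct.map LinearMap.id (TensorProduct.assoc K C1 A B).symm.toLinearMap ∘ₗ
          (TensorProduct.assoc K V0 C1 (A ⊗[K] B)).toLinearMap ∘ₗ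
            TensorProduct.map ρ0 Δ := by
  apply TensorProduct.ext'
  intro v g
  simp only [LinearMap.comp_apply, TensorProduct.map_tmul, LinearMap.id_apply]
  generalize ρ0 v = u
  induction u using TensorProduct.induction_on with
  | zero => simp only [zero_tmul, map_zero]
  | tmul v0 c => simp
  | add s t hs ht =>
    simp only [add_tmul, map_add]
    rw [hs, ht]

/-- The main step: stability of the induced spaces under `I ⊗ Δ^H`. -/
lemma ind_step {π : Type*} [Group π]
    {H : π → Type*} [∀ α, AddCommGroup (H α)] [∀ α, Module K (H α)]
    {V1 C1 : Type*} [AddCommGroup V1] [Module K V1] [AddCommGroup C1] [Module K C1]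
    (hH : PiCoalg K π H) (s : H 1 →ₗ[K] C1) (ρ0 : V1 →ₗ[K] V1 ⊗[K] C1)
    (α β : π) (x : V1 ⊗[K] H (α * β))
    (hx : x ∈ IndSub K ((TensorProduct.map s LinearMap.id) ∘ₗ
        hH.comul 1 (α * β) (one_mul (α * β))) ρ0) :
    (TensorProduct.assoc K V1 (H α) (H β)).symm.toLinearMap
        ((TensorProduct.map LinearMap.id (hH.comul α β rfl)) x)
      ∈ LinearMap.range (TensorProduct.map
          (IndSub K ((TensorProduct.map s LinearMap.id) ∘ₗ
            hH.comul 1 α (one_mul α)) ρ0).subtype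
          (LinearMap.id : H β →ₗ[K] H β)) := by
  set Lα : H α →ₗ[K] C1 ⊗[K] H α :=
    (TensorProduct.map s LinearMap.id) ∘ₗ hH.comul 1 α (one_mul α) with hLα
  set Lγ : H (α * β) →ₗ[K] C1 ⊗[K] H (α * β) :=
    (TensorProduct.map s LinearMap.id) ∘ₗ hH.comul 1 (α * β) (one_mul (α * β)) with hLγ
  set Δ : H (α * β) →ₗ[K] H α ⊗[K] H β := hH.comul α β rfl with hΔ
  set Dα : V1 ⊗[K] H α →ₗ[K] V1 ⊗[K] (C1 ⊗[K] H α) :=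
    TensorProduct.map LinearMap.id Lα -
      (TensorProduct.assoc K V1 C1 (H α)).toLinearMap ∘ₗ
        TensorProduct.map ρ0 LinearMap.id with hDα
  set z : (V1 ⊗[K] H α) ⊗[K] H β :=
    (TensorProduct.assoc K V1 (H α) (H β)).symm.toLinearMap
      ((TensorProduct.map LinearMap.id Δ) x) with hzdef
  -- the defining equation of `Ind`
  have hx0 : (TensorProduct.map LinearMap.id Lγ) x =
      (TensorProduct.assoc K V1 C1 (H (α * β))).toLinearMap
        ((TensorProduct.map ρ0 LinearMap.id) x) := by
    have h' := hx
    rw [IndSub, LinearMap.mem_ker, LinearMap.sub_apply, sub_eq_zero] at h'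
    simpa using h'
  -- first term of `Dα ⊗ I` applied to `z`
  have hkey := L_comul hH s α β
  rw [← hLα, ← hLγ, ← hΔ] at hkey
  have t1 : TensorProduct.map (TensorProduct.map LinearMap.id Lα) LinearMap.id z =
      ((TensorProduct.assoc K V1 (C1 ⊗[K] H α) (H β)).symm.toLinearMap ∘ₗ
        TensorProduct.map LinearMap.id (TensorProduct.assoc K C1 (H α) (H β)).symm.toLinearMap ∘ₗ
          (TensorProduct.assoc K V1 C1 (H α ⊗[K] H β)).toLinearMap ∘ₗ
            TensorProduct.map ρ0 Δ) x := by
    have h1 := congrArg (fun f => f x) (natA (V0 := V1) Lα Δ)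
    simp only [LinearMap.comp_apply] at h1 ⊢
    rw [hzdef]
    rw [h1, hkey]
    rw [← LinearMap.comp_assoc, map_id_comp]
    simp only [LinearMap.comp_apply]
    rw [hx0]
    have h2 := congrArg (fun f => f x) (natB_right (V0 := V1) ρ0 Δ)
    simp only [LinearMap.comp_apply] at h2
    exact h2
  -- second term of `Dα ⊗ I` applied to `z`
  have t2 : TensorProduct.map ((TensorProduct.assoc K V1 C1 (H α)).toLinearMap ∘ₗ
        TensorProduct.map ρ0 LinearMap.id) LinearMap.id z =
      ((TensorProduct.assoc K V1 (C1 ⊗[K] H α) (H β)).symm.toLinearMap ∘ₗ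
        TensorProduct.map LinearMap.id (TensorProduct.assoc K C1 (H α) (H β)).symm.toLinearMap ∘ₗ
          (TensorProduct.assoc K V1 C1 (H α ⊗[K] H β)).toLinearMap ∘ₗ
            TensorProduct.map ρ0 Δ) x := by
    have h1 := congrArg (fun f => f x) (natB_left (V0 := V1) ρ0 Δ)
    simp only [LinearMap.comp_apply] at h1 ⊢
    rw [hzdef]
    exact h1
  -- hence `(Dα ⊗ I) z = 0`
  have hz0 : LinearMap.rTensor (H β) Dα z = 0 := by
    show TensorProduct.map Dα LinearMap.id z = 0
    rw [hDα, map_sub_id]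
    exact sub_eq_zero_of_eq (t1.trans t2.symm)
  -- exactness of `- ⊗ H β`
  have hexact : Function.Exact (IndSub K Lα ρ0).subtype Dα := by
    rw [LinearMap.exact_iff, Submodule.range_subtype]
    rfl
  have hex2 := Module.Flat.rTensor_exact (H β) hexact
  obtain ⟨w, hw⟩ := (hex2 z).mp hz0
  exact ⟨w, hw⟩

end IndAux
/-- If `V` is a right `π`-comodule over the left
`π`-coisotropic quantum subgroup `(C, σ)` of `H`, then the induced family
`Ind(ρ)_α = { x ∈ V_1 ⊗ H_α : (I ⊗ L_{1,α}) x = (ρ_{1,1} ⊗ I) x }` is a right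
`π`-comodule over `H` via `I ⊗ Δ^H`; in particular
`(I ⊗ Δ^H_{α,β})(Ind(ρ)_{αβ}) ⊆ Ind(ρ)_α ⊗ H_β`, and `I ⊗ Δ^H` satisfies the
comodule axioms. -/
theorem ind_is_comodule
    (K : Type*) [Field K] (π : Type*) [Group π]
    (H : π → Type*) [∀ α, Ring (H α)] [∀ α, Algebra K (H α)]
    (C : π → Type*) [∀ α, AddCommGroup (C α)] [∀ α, Module K (C α)]
    (V : π → Type*) [∀ α, AddCommGroup (V α)] [∀ α, Module K (V α)]
    (hH : HopfPiCoalg K π H) (hC : PiCoalg K π C)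
    (co : Coisotropic K π H C hH hC)
    (ρ : PiComodule K π C V hC) :
    (∀ (α β γ : π) (h : α * β = γ) (x : V 1 ⊗[K] H γ),
        x ∈ IndSub K ((TensorProduct.map (co.σ 1) LinearMap.id) ∘ₗ
              hH.comul 1 γ (one_mul γ)) (ρ.coact 1 1 (mul_one 1)) →
        (TensorProduct.assoc K (V 1) (H α) (H β)).symm.toLinearMap
            ((TensorProduct.map LinearMap.id (hH.comul α β h)) x)
          ∈ LinearMap.range (TensorProduct.map
              (IndSub K ((TensorProduct.map (co.σ 1) LinearMap.id) ∘ₗ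
                hH.comul 1 α (one_mul α)) (ρ.coact 1 1 (mul_one 1))).subtype
              (LinearMap.id : H β →ₗ[K] H β))) ∧
    -- coassociativity of the coaction `I ⊗ Δ^H` (canonically reassociated):
    (∀ (α β γ δ : π) (h : α * β * γ = δ) (h' : α * (β * γ) = δ),
        TensorProduct.map (LinearMap.id : V 1 →ₗ[K] V 1)
            ((TensorProduct.assoc K (H α) (H β) (H γ)).toLinearMap ∘ₗ
              (TensorProduct.map (hH.comul α β rfl) LinearMap.id) ∘ₗ
                hH.comul (α * β) γ h)
          = TensorProduct.map (LinearMap.id : V 1 →ₗ[K] V 1)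
              ((TensorProduct.map LinearMap.id (hH.comul β γ rfl)) ∘ₗ
                hH.comul α (β * γ) h')) ∧
    -- counitality of the coaction `I ⊗ Δ^H`:
    (∀ (α : π),
        TensorProduct.map (LinearMap.id : V 1 →ₗ[K] V 1)
            ((TensorProduct.rid K (H α)).toLinearMap ∘ₗ
              (TensorProduct.map LinearMap.id hH.counit) ∘ₗ
                hH.comul α 1 (mul_one α))
          = (LinearMap.id : V 1 ⊗[K] H α →ₗ[K] V 1 ⊗[K] H α)) := by
  refine ⟨?_, ?_, ?_⟩
  · intro α β γ h x hx
    subst h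
    exact ind_step hH.toPiCoalg (co.σ 1) (ρ.coact 1 1 (mul_one 1)) α β x hx
  · intro α β γ δ h h'
    exact congrArg (fun f => TensorProduct.map (LinearMap.id : V 1 →ₗ[K] V 1) f)
      (hH.coassoc α β γ δ h h')
  · intro α
    rw [hH.comul_counit α]
    exact TensorProduct.map_id
end

section
/- Let H be a Hopf π-coalgebra and (C, σ) a Hopf π-subcoalgebra with left section g. Then for every h ∈ H_1 and α ∈ π, the element μ_α(g_α⁻¹ σ_{α⁻¹} ⊗ I_α)Δ^H_{α⁻¹,α}(h) = g_α⁻¹(σ_{α⁻¹}(h₁^{α⁻¹}))·h₂^α belongs to B_α = { k ∈ H_α : (σ_1 ⊗ I_α)Δ^H_{1,α}(k) = 1 ⊗ k }. -/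
open TensorProduct LinearMap

section Aux12
set_option maxHeartbeats 1000000
set_option synthInstance.maxHeartbeats 400000

variable {K : Type*} [Field K] {π : Type*} [Group π]

/-- Cast along an equality of indices. -/
def lcast (X : π → Type*) [∀ a, AddCommGroup (X a)] [∀ a, Module K (X a)] :
    ∀ {a b : π}, a = b → (X a →ₗ[K] X b)
  | _, _, rfl => LinearMap.id

variable {H : π → Type*} [∀ α, Ring (H α)] [∀ α, Algebra K (H α)]
variable {C : π → Type*} [∀ α, Ring (C α)] [∀ α, Algebra K (C α)]

/-- Graded convolution product of two linear maps into an algebra. -/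
noncomputable def gconv (hH : HopfPiCoalg K π H) {B : Type*} [Ring B] [Algebra K B]
    {β γ δ : π} (f : H β →ₗ[K] B) (g : H γ →ₗ[K] B) (h : β * γ = δ) :
    H δ →ₗ[K] B :=
  LinearMap.mul' K B ∘ₗ TensorProduct.map f g ∘ₗ hH.comul β γ h

variable (hH : HopfPiCoalg K π H) (hC : HopfPiCoalg K π C)

theorem comul_src_cast {a b δ δ' : π} (h : a * b = δ) (h' : a * b = δ')
    (e : δ = δ') (x : H δ) :
    hH.comul a b h' (lcast (K := K) H e x) = hH.comul a b h x := by
  subst e; rfl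

theorem gconv_cast_total {B : Type*} [Ring B] [Algebra K B] {β γ δ δ' : π}
    (f : H β →ₗ[K] B) (g : H γ →ₗ[K] B) (h : β * γ = δ) (h' : β * γ = δ') (e : δ = δ') :
    gconv hH f g h = gconv hH f g h' ∘ₗ lcast (K := K) H e := by
  subst e; rfl

theorem gconv_cast_fst {B : Type*} [Ring B] [Algebra K B] {β β' γ δ : π}
    (e : β' = β) (f : H β →ₗ[K] B) (g : H γ →ₗ[K] B) (h : β' * γ = δ) (h' : β * γ = δ) :
    gconv hH (f ∘ₗ lcast (K := K) H e) g h = gconv hH f g h' := by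
  subst e
  show gconv hH (f ∘ₗ LinearMap.id) g h = gconv hH f g h'
  rw [LinearMap.comp_id]

theorem gconv_cast_snd {B : Type*} [Ring B] [Algebra K B] {β γ γ' δ : π}
    (e : γ' = γ) (f : H β →ₗ[K] B) (g : H γ →ₗ[K] B) (h : β * γ' = δ) (h' : β * γ = δ) :
    gconv hH f (g ∘ₗ lcast (K := K) H e) h = gconv hH f g h' := by
  subst e
  show gconv hH f (g ∘ₗ LinearMap.id) h = gconv hH f g h'
  rw [LinearMap.comp_id]

theorem gconv_comp_lcast_rfl {B : Type*} [Ring B] [Algebra K B] {β γ δ : π}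
    (f : H β →ₗ[K] B) (g : H γ →ₗ[K] B) (h : β * γ = δ) :
    gconv hH f g h ∘ₗ lcast (K := K) H rfl = gconv hH f g h := rfl

theorem gconv_comp {B B' : Type*} [Ring B] [Algebra K B] [Ring B'] [Algebra K B']
    (T : B →ₗ[K] B') (hT : ∀ x y : B, T (x * y) = T x * T y)
    {β γ δ : π} (f : H β →ₗ[K] B) (g : H γ →ₗ[K] B) (h : β * γ = δ) :
    T ∘ₗ gconv hH f g h = gconv hH (T ∘ₗ f) (T ∘ₗ g) h := by
  apply LinearMap.ext; intro x
  simp only [gconv, coe_comp, Function.comp_apply]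
  generalize hH.comul β γ h x = t
  induction t using TensorProduct.induction_on with
  | zero => simp
  | tmul a b => simp [mul'_apply, hT]
  | add u v hu hv => simp only [map_add, hu, hv]

theorem gconv_assoc {B : Type*} [Ring B] [Algebra K B] {β γ δ ρ : π}
    (f : H β →ₗ[K] B) (g : H γ →ₗ[K] B) (k : H δ →ₗ[K] B)
    (h1 : β * γ * δ = ρ) (h2 : β * (γ * δ) = ρ) :
    gconv hH (gconv hH f g rfl) k h1 = gconv hH f (gconv hH g k rfl) h2 := by
  apply LinearMap.ext; intro x
  have cox := LinearMap.congr_fun (hH.coassoc β γ δ ρ h1 h2) x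
  simp only [coe_comp, Function.comp_apply, LinearEquiv.coe_coe] at cox
  simp only [gconv, coe_comp, Function.comp_apply]
  have A : ∀ t : H (β * γ) ⊗[K] H δ,
      LinearMap.mul' K B (TensorProduct.map
        (LinearMap.mul' K B ∘ₗ TensorProduct.map f g ∘ₗ hH.comul β γ rfl) k t)
      = LinearMap.mul' K B (TensorProduct.map f (LinearMap.mul' K B ∘ₗ TensorProduct.map g k)
          ((TensorProduct.assoc K (H β) (H γ) (H δ))
            (TensorProduct.map (hH.comul β γ rfl) LinearMap.id t))) := by
    intro t
    induction t using TensorProduct.induction_on with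
    | zero => simp
    | tmul u z =>
      simp only [map_tmul, coe_comp, Function.comp_apply, id_coe, id_eq, mul'_apply]
      generalize hH.comul β γ rfl u = s
      induction s using TensorProduct.induction_on with
      | zero => simp
      | tmul a b => simp [assoc_tmul, mul'_apply, mul_assoc]
      | add p q hp hq => simp only [TensorProduct.add_tmul, map_add, add_mul, hp, hq]
    | add p q hp hq => simp only [map_add, hp, hq]
  have Bb : ∀ t : H β ⊗[K] H (γ * δ),
      LinearMap.mul' K B (TensorProduct.map f
        (LinearMap.mul' K B ∘ₗ TensorProduct.map g k ∘ₗ hH.comul γ δ rfl) t)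
      = LinearMap.mul' K B (TensorProduct.map f (LinearMap.mul' K B ∘ₗ TensorProduct.map g k)
          (TensorProduct.map LinearMap.id (hH.comul γ δ rfl) t)) := by
    intro t
    induction t using TensorProduct.induction_on with
    | zero => simp
    | tmul u v => simp [mul'_apply]
    | add p q hp hq => simp only [map_add, hp, hq]
  rw [A, Bb, cox]

theorem gconv_unit_left {B : Type*} [Ring B] [Algebra K B] {β δ : π}
    (f : H β →ₗ[K] B) (h : 1 * β = δ) (e : δ = β) :
    gconv hH (Algebra.linearMap K B ∘ₗ hH.counit) f h = f ∘ₗ lcast (K := K) H e := by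
  apply LinearMap.ext; intro x
  have hx := LinearMap.congr_fun (hH.counit_comul β) (lcast (K := K) H e x)
  simp only [coe_comp, Function.comp_apply, LinearEquiv.coe_coe, id_coe, id_eq] at hx
  simp only [gconv, coe_comp, Function.comp_apply]
  rw [← comul_src_cast hH h (one_mul β) e x]
  conv_rhs => rw [← hx]
  generalize hH.comul 1 β (one_mul β) (lcast (K := K) H e x) = t
  induction t using TensorProduct.induction_on with
  | zero => simp
  | tmul a b => simp [mul'_apply, lid_tmul, map_smul, ← Algebra.smul_def]
  | add p q hp hq => simp only [map_add, hp, hq]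

theorem gconv_unit_right {B : Type*} [Ring B] [Algebra K B] {β δ : π}
    (f : H β →ₗ[K] B) (h : β * 1 = δ) (e : δ = β) :
    gconv hH f (Algebra.linearMap K B ∘ₗ hH.counit) h = f ∘ₗ lcast (K := K) H e := by
  apply LinearMap.ext; intro x
  have hx := LinearMap.congr_fun (hH.comul_counit β) (lcast (K := K) H e x)
  simp only [coe_comp, Function.comp_apply, LinearEquiv.coe_coe, id_coe, id_eq] at hx
  simp only [gconv, coe_comp, Function.comp_apply]
  rw [← comul_src_cast hH h (mul_one β) e x]
  conv_rhs => rw [← hx]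
  generalize hH.comul β 1 (mul_one β) (lcast (K := K) H e x) = t
  induction t using TensorProduct.induction_on with
  | zero => simp
  | tmul a b => simp [mul'_apply, rid_tmul, map_smul, ← Algebra.commutes, ← Algebra.smul_def]
  | add p q hp hq => simp only [map_add, hp, hq]

variable (S : HopfPiSub K π H C hH hC) (G : PiSection K π H C hH hC S)

/-- `L_{1,α} = (σ_1 ⊗ I)Δ^H_{1,α}`. -/
noncomputable def LLm (α : π) : H α →ₗ[K] C 1 ⊗[K] H α :=
  TensorProduct.map (S.σ 1) LinearMap.id ∘ₗ hH.comul 1 α (one_mul α)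

/-- `x ↦ 1 ⊗ x`. -/
noncomputable def nnm (_S : HopfPiSub K π H C hH hC) (α : π) : H α →ₗ[K] C 1 ⊗[K] H α :=
  TensorProduct.mk K (C 1) (H α) 1

/-- `x ↦ σ_1(x) ⊗ 1`. -/
noncomputable def ssm (α : π) : H 1 →ₗ[K] C 1 ⊗[K] H α :=
  (TensorProduct.mk K (C 1) (H α)).flip 1 ∘ₗ S.σ 1

/-- `g_α⁻¹ ∘ σ_{α⁻¹}`. -/
noncomputable def PPm (α : π) : H α⁻¹ →ₗ[K] H α :=
  G.ginv α α⁻¹ rfl ∘ₗ S.σ α⁻¹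

/-- `g_α ∘ σ_α`. -/
noncomputable def QQm (α : π) : H α →ₗ[K] H α :=
  G.g α ∘ₗ S.σ α

theorem LLm_mul (α : π) (x y : H α) :
    LLm hH hC S α (x * y) = LLm hH hC S α x * LLm hH hC S α y := by
  have key : ∀ u v : H 1 ⊗[K] H α,
      TensorProduct.map (S.σ 1) (LinearMap.id (R := K) (M := H α)) (u * v)
        = TensorProduct.map (S.σ 1) LinearMap.id u
          * TensorProduct.map (S.σ 1) LinearMap.id v := by
    intro u v
    induction u using TensorProduct.induction_on with
    | zero => simp [zero_mul]
    | tmul a b =>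
      induction v using TensorProduct.induction_on with
      | zero => simp [mul_zero]
      | tmul c d => simp [Algebra.TensorProduct.tmul_mul_tmul, S.σ_mul]
      | add u v hu hv => simp only [mul_add, map_add, hu, hv]
    | add u v hu hv => simp only [add_mul, map_add, hu, hv]
  simp only [LLm, coe_comp, Function.comp_apply, hH.comul_mul 1 α α (one_mul α) x y, key]

theorem LLm_one (α : π) : LLm hH hC S α 1 = 1 := by
  simp only [LLm, coe_comp, Function.comp_apply, hH.comul_one 1 α α (one_mul α),
    Algebra.TensorProduct.one_def, map_tmul, S.σ_one, id_coe, id_eq]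

theorem nnm_mul (α : π) (x y : H α) :
    nnm hH hC S α (x * y) = nnm hH hC S α x * nnm hH hC S α y := by
  simp [nnm, TensorProduct.mk_apply, Algebra.TensorProduct.tmul_mul_tmul]

theorem nnm_one (α : π) : nnm hH hC S α 1 = 1 := by
  simp [nnm, Algebra.TensorProduct.one_def]

theorem convPQ (α : π) :
    gconv hH (PPm hH hC S G α) (QQm hH hC S G α) (inv_mul_cancel α)
      = Algebra.linearMap K (H α) ∘ₗ hH.counit := by
  apply LinearMap.ext; intro x
  have h1 := LinearMap.congr_fun (S.σ_comul α⁻¹ α 1 (inv_mul_cancel α)) x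
  have h2 := LinearMap.congr_fun (G.conv_left α) (S.σ 1 x)
  have h3 := LinearMap.congr_fun S.σ_counit x
  simp only [coe_comp, Function.comp_apply] at h1 h2 h3 ⊢
  simp only [gconv, PPm, QQm, coe_comp, Function.comp_apply]
  rw [TensorProduct.map_comp, coe_comp, Function.comp_apply, ← h1, h2, h3]

theorem convQP (α : π) :
    gconv hH (QQm hH hC S G α) (PPm hH hC S G α) (mul_inv_cancel α)
      = Algebra.linearMap K (H α) ∘ₗ hH.counit := by
  apply LinearMap.ext; intro x
  have h1 := LinearMap.congr_fun (S.σ_comul α α⁻¹ 1 (mul_inv_cancel α)) x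
  have h2 := LinearMap.congr_fun (G.conv_right α) (S.σ 1 x)
  have h3 := LinearMap.congr_fun S.σ_counit x
  simp only [coe_comp, Function.comp_apply] at h1 h2 h3 ⊢
  simp only [gconv, PPm, QQm, coe_comp, Function.comp_apply]
  rw [TensorProduct.map_comp, coe_comp, Function.comp_apply, ← h1, h2, h3]

theorem LLm_eq_conv (α : π) :
    LLm hH hC S α = gconv hH (ssm hH hC S α) (nnm hH hC S α) (one_mul α) := by
  apply LinearMap.ext; intro x
  simp only [LLm, gconv, coe_comp, Function.comp_apply]
  generalize hH.comul 1 α (one_mul α) x = t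
  induction t using TensorProduct.induction_on with
  | zero => simp
  | tmul a b =>
    simp [ssm, nnm, mul'_apply, Algebra.TensorProduct.tmul_mul_tmul,
      TensorProduct.mk_apply, flip_apply]
  | add u v hu hv => simp only [map_add, hu, hv]

theorem LLmQ_eq_conv (α : π) :
    LLm hH hC S α ∘ₗ QQm hH hC S G α
      = gconv hH (ssm hH hC S α) (nnm hH hC S α ∘ₗ QQm hH hC S G α) (one_mul α) := by
  apply LinearMap.ext; intro x
  have h1 := LinearMap.congr_fun (G.g_sec α) (S.σ α x)
  have h2 := LinearMap.congr_fun (S.σ_comul 1 α α (one_mul α)) x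
  simp only [coe_comp, Function.comp_apply] at h1 h2 ⊢
  simp only [LLm, QQm, gconv, coe_comp, Function.comp_apply]
  rw [h1, h2]
  generalize hH.comul 1 α (one_mul α) x = t
  induction t using TensorProduct.induction_on with
  | zero => simp
  | tmul a b =>
    simp [ssm, nnm, mul'_apply, Algebra.TensorProduct.tmul_mul_tmul,
      TensorProduct.mk_apply, flip_apply]
  | add u v hu hv => simp only [map_add, hu, hv]

theorem conv_uv (α : π) :
    gconv hH (LLm hH hC S α ∘ₗ PPm hH hC S G α) (LLm hH hC S α ∘ₗ QQm hH hC S G α)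
        (inv_mul_cancel α)
      = Algebra.linearMap K (C 1 ⊗[K] H α) ∘ₗ hH.counit := by
  rw [← gconv_comp hH (LLm hH hC S α) (LLm_mul hH hC S α) (PPm hH hC S G α)
    (QQm hH hC S G α) (inv_mul_cancel α), convPQ hH hC S G α]
  apply LinearMap.ext; intro x
  simp only [coe_comp, Function.comp_apply, Algebra.linearMap_apply,
    Algebra.algebraMap_eq_smul_one, map_smul, LLm_one hH hC S α]

theorem conv_qp (α : π) :
    gconv hH (nnm hH hC S α ∘ₗ QQm hH hC S G α) (nnm hH hC S α ∘ₗ PPm hH hC S G α)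
        (mul_inv_cancel α)
      = Algebra.linearMap K (C 1 ⊗[K] H α) ∘ₗ hH.counit := by
  rw [← gconv_comp hH (nnm hH hC S α) (nnm_mul hH hC S α) (QQm hH hC S G α)
    (PPm hH hC S G α) (mul_inv_cancel α), convQP hH hC S G α]
  apply LinearMap.ext; intro x
  simp only [coe_comp, Function.comp_apply, Algebra.linearMap_apply,
    Algebra.algebraMap_eq_smul_one, map_smul, nnm_one hH hC S α]
theorem key_lemma (α : π) :
    gconv hH (LLm hH hC S α ∘ₗ PPm hH hC S G α) (ssm hH hC S α) rfl
      = (nnm hH hC S α ∘ₗ PPm hH hC S G α) ∘ₗ lcast (K := K) H (mul_one α⁻¹) := by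
  have hsq : gconv hH (ssm hH hC S α) (nnm hH hC S α ∘ₗ QQm hH hC S G α) rfl
      = (LLm hH hC S α ∘ₗ QQm hH hC S G α) ∘ₗ lcast (K := K) H (one_mul α) := by
    rw [gconv_cast_total hH (ssm hH hC S α) (nnm hH hC S α ∘ₗ QQm hH hC S G α) rfl
      (one_mul α) (one_mul α), ← LLmQ_eq_conv hH hC S G α]
  have hqp : gconv hH (nnm hH hC S α ∘ₗ QQm hH hC S G α) (nnm hH hC S α ∘ₗ PPm hH hC S G α) rfl
      = (Algebra.linearMap K (C 1 ⊗[K] H α) ∘ₗ hH.counit) ∘ₗ lcast (K := K) H (mul_inv_cancel α) := by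
    rw [gconv_cast_total hH (nnm hH hC S α ∘ₗ QQm hH hC S G α)
      (nnm hH hC S α ∘ₗ PPm hH hC S G α) rfl (mul_inv_cancel α) (mul_inv_cancel α),
      conv_qp hH hC S G α]
  have T1 : gconv hH
        (gconv hH (LLm hH hC S α ∘ₗ PPm hH hC S G α) (ssm hH hC S α) rfl)
        (nnm hH hC S α ∘ₗ QQm hH hC S G α) rfl
      = (Algebra.linearMap K (C 1 ⊗[K] H α) ∘ₗ hH.counit)
          ∘ₗ lcast (K := K) H (show α⁻¹ * 1 * α = 1 by group) := by
    rw [gconv_assoc hH (LLm hH hC S α ∘ₗ PPm hH hC S G α) (ssm hH hC S α)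
        (nnm hH hC S α ∘ₗ QQm hH hC S G α) rfl (show α⁻¹ * (1 * α) = α⁻¹ * 1 * α by group),
      hsq,
      gconv_cast_snd hH (one_mul α) (LLm hH hC S α ∘ₗ PPm hH hC S G α)
        (LLm hH hC S α ∘ₗ QQm hH hC S G α) (show α⁻¹ * (1 * α) = α⁻¹ * 1 * α by group)
        (show α⁻¹ * α = α⁻¹ * 1 * α by group),
      gconv_cast_total hH (LLm hH hC S α ∘ₗ PPm hH hC S G α)
        (LLm hH hC S α ∘ₗ QQm hH hC S G α) (show α⁻¹ * α = α⁻¹ * 1 * α by group)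
        (inv_mul_cancel α) (show α⁻¹ * 1 * α = 1 by group),
      conv_uv hH hC S G α]
  have T3 : gconv hH
        (gconv hH (gconv hH (LLm hH hC S α ∘ₗ PPm hH hC S G α) (ssm hH hC S α) rfl)
          (nnm hH hC S α ∘ₗ QQm hH hC S G α) rfl)
        (nnm hH hC S α ∘ₗ PPm hH hC S G α)
        (show α⁻¹ * 1 * α * α⁻¹ = α⁻¹ * 1 by group)
      = gconv hH (LLm hH hC S α ∘ₗ PPm hH hC S G α) (ssm hH hC S α) rfl := by
    rw [gconv_assoc hH
        (gconv hH (LLm hH hC S α ∘ₗ PPm hH hC S G α) (ssm hH hC S α) rfl)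
        (nnm hH hC S α ∘ₗ QQm hH hC S G α) (nnm hH hC S α ∘ₗ PPm hH hC S G α)
        (show α⁻¹ * 1 * α * α⁻¹ = α⁻¹ * 1 by group)
        (show α⁻¹ * 1 * (α * α⁻¹) = α⁻¹ * 1 by group),
      hqp,
      gconv_cast_snd hH (mul_inv_cancel α)
        (gconv hH (LLm hH hC S α ∘ₗ PPm hH hC S G α) (ssm hH hC S α) rfl)
        (Algebra.linearMap K (C 1 ⊗[K] H α) ∘ₗ hH.counit)
        (show α⁻¹ * 1 * (α * α⁻¹) = α⁻¹ * 1 by group)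
        (show α⁻¹ * 1 * 1 = α⁻¹ * 1 by group),
      gconv_unit_right hH
        (gconv hH (LLm hH hC S α ∘ₗ PPm hH hC S G α) (ssm hH hC S α) rfl)
        (show α⁻¹ * 1 * 1 = α⁻¹ * 1 by group) rfl,
      gconv_comp_lcast_rfl]
  calc gconv hH (LLm hH hC S α ∘ₗ PPm hH hC S G α) (ssm hH hC S α) rfl
      = gconv hH
          (gconv hH (gconv hH (LLm hH hC S α ∘ₗ PPm hH hC S G α) (ssm hH hC S α) rfl)
            (nnm hH hC S α ∘ₗ QQm hH hC S G α) rfl)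
          (nnm hH hC S α ∘ₗ PPm hH hC S G α)
          (show α⁻¹ * 1 * α * α⁻¹ = α⁻¹ * 1 by group) := T3.symm
    _ = (nnm hH hC S α ∘ₗ PPm hH hC S G α) ∘ₗ lcast (K := K) H (mul_one α⁻¹) := by
        rw [T1,
          gconv_cast_fst hH (show α⁻¹ * 1 * α = 1 by group)
            (Algebra.linearMap K (C 1 ⊗[K] H α) ∘ₗ hH.counit)
            (nnm hH hC S α ∘ₗ PPm hH hC S G α)
            (show α⁻¹ * 1 * α * α⁻¹ = α⁻¹ * 1 by group)
            (show 1 * α⁻¹ = α⁻¹ * 1 by group),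
          gconv_unit_left hH (nnm hH hC S α ∘ₗ PPm hH hC S G α)
            (show 1 * α⁻¹ = α⁻¹ * 1 by group) (mul_one α⁻¹)]

theorem main_identity (α : π) :
    gconv hH (LLm hH hC S α ∘ₗ PPm hH hC S G α) (LLm hH hC S α) rfl
      = gconv hH (nnm hH hC S α ∘ₗ PPm hH hC S G α) (nnm hH hC S α) rfl := by
  set u := LLm hH hC S α ∘ₗ PPm hH hC S G α with hu
  have k := key_lemma hH hC S G α
  rw [← hu] at k
  rw [LLm_eq_conv hH hC S α,
    gconv_cast_total hH (ssm hH hC S α) (nnm hH hC S α) (one_mul α) rfl (one_mul α).symm,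
    gconv_cast_snd hH (one_mul α).symm u (gconv hH (ssm hH hC S α) (nnm hH hC S α) rfl)
      rfl (show α⁻¹ * (1 * α) = α⁻¹ * α by group),
    ← gconv_assoc hH u (ssm hH hC S α) (nnm hH hC S α)
      (show α⁻¹ * 1 * α = α⁻¹ * α by group) (show α⁻¹ * (1 * α) = α⁻¹ * α by group),
    k,
    gconv_cast_fst hH (mul_one α⁻¹) (nnm hH hC S α ∘ₗ PPm hH hC S G α) (nnm hH hC S α)
      (show α⁻¹ * 1 * α = α⁻¹ * α by group) rfl]
theorem final_identity (α : π) :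
    LLm hH hC S α ∘ₗ gconv hH (PPm hH hC S G α) LinearMap.id (inv_mul_cancel α)
      = nnm hH hC S α ∘ₗ gconv hH (PPm hH hC S G α) LinearMap.id (inv_mul_cancel α) := by
  rw [gconv_comp hH (LLm hH hC S α) (LLm_mul hH hC S α) (PPm hH hC S G α)
      LinearMap.id (inv_mul_cancel α),
    gconv_comp hH (nnm hH hC S α) (nnm_mul hH hC S α) (PPm hH hC S G α)
      LinearMap.id (inv_mul_cancel α),
    LinearMap.comp_id, LinearMap.comp_id,
    gconv_cast_total hH (LLm hH hC S α ∘ₗ PPm hH hC S G α) (LLm hH hC S α)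
      (inv_mul_cancel α) rfl (inv_mul_cancel α).symm,
    gconv_cast_total hH (nnm hH hC S α ∘ₗ PPm hH hC S G α) (nnm hH hC S α)
      (inv_mul_cancel α) rfl (inv_mul_cancel α).symm,
    main_identity hH hC S G α]

end Aux12

/-- For a Hopf `π`-subcoalgebra `(C, σ)` of `H` with left
section `g`, for every `h ∈ H_1` the element
`μ_α(g_α⁻¹ σ_{α⁻¹} ⊗ I)Δ^H_{α⁻¹,α}(h) = g_α⁻¹(σ_{α⁻¹}(h₁))·h₂` lies in
`B_α = { k ∈ H_α : (σ_1 ⊗ I)Δ^H_{1,α}(k) = 1 ⊗ k }`. -/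
theorem ginv_sigma_mem_B
    (K : Type*) [Field K] (π : Type*) [Group π]
    (H : π → Type*) [∀ α, Ring (H α)] [∀ α, Algebra K (H α)]
    (C : π → Type*) [∀ α, Ring (C α)] [∀ α, Algebra K (C α)]
    (hH : HopfPiCoalg K π H) (hC : HopfPiCoalg K π C)
    (S : HopfPiSub K π H C hH hC)
    (G : PiSection K π H C hH hC S) :
    ∀ (α : π) (h : H 1),
      ((LinearMap.mul' K (H α)) ∘ₗ
          (TensorProduct.map ((G.ginv α α⁻¹ rfl) ∘ₗ S.σ α⁻¹) LinearMap.id) ∘ₗ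
          hH.comul α⁻¹ α (inv_mul_cancel α)) h
        ∈ Bsub K ((TensorProduct.map (S.σ 1) LinearMap.id) ∘ₗ
            hH.comul 1 α (one_mul α)) (1 : C 1) := by
  intro α h
  have hfin := LinearMap.congr_fun (final_identity hH hC S G α) h
  simp only [coe_comp, Function.comp_apply] at hfin
  rw [Bsub, LinearMap.mem_ker, LinearMap.sub_apply, sub_eq_zero]
  exact hfin
end
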